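/- arXiv:2002.02854 — 16 statements merged into one kernel-verified Lean document; each statement's English description precedes it below -/
import Mathlib

section
/- A left quasigroup (X,*) that satisfies the rack identity (x*y)*(x*z) = x*(y*z) and also the twisted Ward identity (x*y)*(x*z) = (y*y)*(y*z) is permutational, i.e., all left translations coincide. -/
/-- Both identities rewrite `(a * x) * (a * z)`, so `L_a ∘ L_x = L_{x * x} ∘ L_x`;
then cancel the surjection `L_x`. -/
theorem mul_eq_mul_mul_self_of_surjective {X : Type*} (mul : X → X → X)
    (rack : ∀ x y z : X, mul (mul x y) (mul x z) = mul x (mul y z))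
    (tW : ∀ x y z : X, mul (mul x y) (mul x z) = mul (mul y y) (mul y z))
    {x : X} (hx : Function.Surjective (mul x)) (a : X) :
    mul a = mul (mul x x) :=
  hx.injective_comp_right <| funext fun z => (rack a x z).symm.trans (tW a x z)

/-- A left quasigroup satisfying both the rack identity and the twisted Ward
identity is permutational: all left translations coincide. -/
theorem stmt_0 {X : Type*} (mul : X → X → X)
    (hL : ∀ x : X, Function.Bijective (mul x))
    (rack : ∀ x y z : X, mul (mul x y) (mul x z) = mul x (mul y z))
    (tW : ∀ x y z : X, mul (mul x y) (mul x z) = mul (mul y y) (mul y z)) :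
    ∀ x y : X, mul x = mul y := by
  intro x y
  have h := mul_eq_mul_mul_self_of_surjective mul rack tW (hL x).surjective
  rw [h x, h y]
end

section
/- A left quasigroup (X,*) that satisfies the Rump identity (x*y)*(x*z) = (y*x)*(y*z) and also the twisted Ward identity (x*y)*(x*z) = (y*y)*(y*z) is permutational. -/
/-!
Comparing the Rump and twisted Ward identities gives `L_{y*x} ∘ L_y = L_{y*y} ∘ L_y`; cancelling the
surjective `L_y` and using that every element has the form `y*x`, every left translation equals
`L_{y*y}`, whatever `y` is.
-/

section LeftTranslations

variable {X : Type*} (mul : X → X → X)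

theorem mul_comp_mul_eq_mul_self_comp_mul
    (rump : ∀ x y z : X, mul (mul x y) (mul x z) = mul (mul y x) (mul y z))
    (tW : ∀ x y z : X, mul (mul x y) (mul x z) = mul (mul y y) (mul y z)) (x y : X) :
    mul (mul y x) ∘ mul y = mul (mul y y) ∘ mul y :=
  funext fun z => (rump x y z).symm.trans (tW x y z)

theorem mul_eq_mul_self_of_surjective (hS : ∀ y : X, Function.Surjective (mul y))
    (rump : ∀ x y z : X, mul (mul x y) (mul x z) = mul (mul y x) (mul y z))
    (tW : ∀ x y z : X, mul (mul x y) (mul x z) = mul (mul y y) (mul y z)) (a y : X) :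
    mul a = mul (mul y y) := by
  obtain ⟨x, rfl⟩ := hS y a
  exact (hS y).injective_comp_right (mul_comp_mul_eq_mul_self_comp_mul mul rump tW x y)

end LeftTranslations

/-- A left quasigroup satisfying both the Rump identity and the twisted Ward
identity is permutational: all left translations coincide. -/
theorem stmt_1 {X : Type*} (mul : X → X → X)
    (hL : ∀ x : X, Function.Bijective (mul x))
    (rump : ∀ x y z : X, mul (mul x y) (mul x z) = mul (mul y x) (mul y z))
    (tW : ∀ x y z : X, mul (mul x y) (mul x z) = mul (mul y y) (mul y z)) :
    ∀ x y : X, mul x = mul y := by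
  have hS : ∀ y : X, Function.Surjective (mul y) := fun y => (hL y).surjective
  intro x y
  rw [mul_eq_mul_self_of_surjective mul hS rump tW x x,
    mul_eq_mul_self_of_surjective mul hS rump tW y x]
end

section
/- In a twisted Ward quasigroup, the squaring map x ↦ x*x is constant. -/
theorem mul_self_eq_of_surjective_mul_right {X : Type*} (mul : X → X → X) {y : X}
    (hy : Function.Surjective (fun x => mul x y))
    (tW : ∀ x, mul (mul x y) (mul x y) = mul (mul y y) (mul y y)) (w : X) :
    mul w w = mul (mul y y) (mul y y) := by
  obtain ⟨x, rfl⟩ := hy w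
  exact tW x

theorem stmt_3_general {X : Type*} (mul : X → X → X)
    (hR : ∀ z : X, Function.Bijective (fun x => mul x z))
    (tW : ∀ x y z : X, mul (mul x y) (mul x z) = mul (mul y y) (mul y z)) :
    ∀ x y : X, mul x x = mul y y := by
  intro x y
  have square_eq := mul_self_eq_of_surjective_mul_right mul (hR y).surjective (fun x => tW x y y)
  exact (square_eq x).trans (square_eq y).symm

/-- In a twisted Ward quasigroup, the squaring map is constant. -/
theorem stmt_3 {X : Type*} (mul : X → X → X)
    (hL : ∀ x : X, Function.Bijective (mul x))
    (hR : ∀ z : X, Function.Bijective (fun x => mul x z))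
    (tW : ∀ x y z : X, mul (mul x y) (mul x z) = mul (mul y y) (mul y z)) :
    ∀ x y : X, mul x x = mul y y :=
  stmt_3_general mul hR tW
end

section
/- In a twisted Ward quasigroup, if a₁*c₁ = a₂*c₂ then L_{a₁} ∘ L_{c₁}⁻¹ = L_{a₂} ∘ L_{c₂}⁻¹, where L_x denotes the left translation y ↦ x*y. -/
/-!
Surjectivity of right translations turns the identity `(x*y)*(x*y) = (y*y)*(y*y)` into
`u*u = (y*y)*(y*y)` for every `u`, so all squares are equal. Hence the identity says that
`(a*c)*(a*w)` depends only on `c*w`, and cancelling the common left factor `a₁*c₁ = a₂*c₂`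
gives `a₁*w₁ = a₂*w₂`.
-/

theorem mul_self_eq_mul_self_of_twistedWard {X : Type*} (mul : X → X → X)
    (hR : ∀ z : X, Function.Surjective (fun x => mul x z))
    (tW : ∀ x y z : X, mul (mul x y) (mul x z) = mul (mul y y) (mul y z)) (u v : X) :
    mul u u = mul v v := by
  have mul_self_eq (u : X) : mul u u = mul (mul v v) (mul v v) := by
    obtain ⟨x, rfl⟩ := hR v u
    exact tW x v v
  rw [mul_self_eq u, ← mul_self_eq v]

/-- In a twisted Ward quasigroup, if a₁*c₁ = a₂*c₂ then
L_{a₁} ∘ L_{c₁}⁻¹ = L_{a₂} ∘ L_{c₂}⁻¹: whenever c₁*w₁ = c₂*w₂ (= z), we have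
a₁*w₁ = a₂*w₂. -/
theorem stmt_4 {X : Type*} (mul : X → X → X)
    (hL : ∀ x : X, Function.Bijective (mul x))
    (hR : ∀ z : X, Function.Bijective (fun x => mul x z))
    (tW : ∀ x y z : X, mul (mul x y) (mul x z) = mul (mul y y) (mul y z))
    (a₁ a₂ c₁ c₂ : X) (h : mul a₁ c₁ = mul a₂ c₂) :
    ∀ w₁ w₂ : X, mul c₁ w₁ = mul c₂ w₂ → mul a₁ w₁ = mul a₂ w₂ := by
  intro w₁ w₂ hw
  have hsq := mul_self_eq_mul_self_of_twistedWard mul (fun z => (hR z).2) tW c₁ c₂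
  apply (hL (mul a₁ c₁)).1
  calc mul (mul a₁ c₁) (mul a₁ w₁) = mul (mul c₁ c₁) (mul c₁ w₁) := tW a₁ c₁ w₁
    _ = mul (mul c₂ c₂) (mul c₂ w₂) := by rw [hsq, hw]
    _ = mul (mul a₁ c₁) (mul a₂ w₂) := by rw [h, tW a₂ c₂ w₂]
end

section
/- Every twisted Ward quasigroup satisfies the quadrangle criterion: for all a₁,a₂,b₁,b₂,c₁,c₂,d₁,d₂, if a₁*c₁ = a₂*c₂, a₁*d₁ = a₂*d₂ and b₁*c₁ = b₂*c₂, then b₁*d₁ = b₂*d₂. -/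
/-!
By the twisted Ward identity, `(x*y)*(x*z)` does not depend on `x`. Hence
`(b₁*c₁)*(b₁*d₁) = (a₁*c₁)*(a₁*d₁) = (a₂*c₂)*(a₂*d₂) = (b₂*c₂)*(b₂*d₂) = (b₁*c₁)*(b₂*d₂)`,
and cancelling `b₁*c₁` on the left gives `b₁*d₁ = b₂*d₂`.
-/

theorem twistedWard_mul_mul_mul_eq {X : Type*} (mul : X → X → X)
    (tW : ∀ x y z : X, mul (mul x y) (mul x z) = mul (mul y y) (mul y z)) (x x' y z : X) :
    mul (mul x y) (mul x z) = mul (mul x' y) (mul x' z) :=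
  (tW x y z).trans (tW x' y z).symm

theorem stmt_5_general {X : Type*} (mul : X → X → X)
    (hL : ∀ x : X, Function.Bijective (mul x))
    (tW : ∀ x y z : X, mul (mul x y) (mul x z) = mul (mul y y) (mul y z))
    (a₁ a₂ b₁ b₂ c₁ c₂ d₁ d₂ : X)
    (h1 : mul a₁ c₁ = mul a₂ c₂) (h2 : mul a₁ d₁ = mul a₂ d₂)
    (h3 : mul b₁ c₁ = mul b₂ c₂) :
    mul b₁ d₁ = mul b₂ d₂ := by
  apply (hL (mul b₁ c₁)).injective
  calc mul (mul b₁ c₁) (mul b₁ d₁) = mul (mul a₁ c₁) (mul a₁ d₁) :=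
        twistedWard_mul_mul_mul_eq mul tW _ _ _ _
    _ = mul (mul a₂ c₂) (mul a₂ d₂) := by rw [h1, h2]
    _ = mul (mul b₂ c₂) (mul b₂ d₂) := twistedWard_mul_mul_mul_eq mul tW _ _ _ _
    _ = mul (mul b₁ c₁) (mul b₂ d₂) := by rw [h3]

/-- Every twisted Ward quasigroup satisfies the quadrangle criterion. -/
theorem stmt_5 {X : Type*} (mul : X → X → X)
    (hL : ∀ x : X, Function.Bijective (mul x))
    (hR : ∀ z : X, Function.Bijective (fun x => mul x z))
    (tW : ∀ x y z : X, mul (mul x y) (mul x z) = mul (mul y y) (mul y z))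
    (a₁ a₂ b₁ b₂ c₁ c₂ d₁ d₂ : X)
    (h1 : mul a₁ c₁ = mul a₂ c₂) (h2 : mul a₁ d₁ = mul a₂ d₂)
    (h3 : mul b₁ c₁ = mul b₂ c₂) :
    mul b₁ d₁ = mul b₂ d₂ :=
  stmt_5_general mul hL tW a₁ a₂ b₁ b₂ c₁ c₂ d₁ d₂ h1 h2 h3
end

section
/- Let (X,·) be a group, ψ an automorphism of (X,·) and c ∈ X. Define x*y = c·ψ(x⁻¹·y). Then (X,*) is a twisted Ward quasigroup, i.e., all left and right translations of * are bijections and (x*y)*(x*z) = (y*y)*(y*z) for all x,y,z. -/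
/-! The product `(x * y) * (x * z)` depends on `x` only through the quotient
`(x * y)⁻¹ · (x * z) = ψ (y⁻¹ · z)`, in which `x` cancels; taking `x = y` gives the identity.
Each translation is a composite of group translations, inversion and `ψ`, hence bijective. -/

open Function

namespace TwistedWard

variable {X : Type*} [Group X]

def op (ψ : X → X) (c x y : X) : X := c * ψ (x⁻¹ * y)

theorem op_left_bijective {ψ : X → X} (hψ : Bijective ψ) (c x : X) : Bijective (op ψ c x) :=
  (Equiv.mulLeft c).bijective.comp (hψ.comp (Equiv.mulLeft x⁻¹).bijective)

theorem op_right_bijective {ψ : X → X} (hψ : Bijective ψ) (c z : X) :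
    Bijective (fun x => op ψ c x z) :=
  (Equiv.mulLeft c).bijective.comp
    (hψ.comp ((Equiv.mulRight z).bijective.comp (Equiv.inv X).bijective))

theorem inv_op_mul_op (ψ : X →* X) (c x y z : X) :
    (op ψ c x y)⁻¹ * op ψ c x z = ψ (y⁻¹ * z) := by
  simp only [op, mul_inv_rev, ← map_inv, mul_assoc, inv_mul_cancel_left, ← map_mul]

theorem op_op_op (ψ : X →* X) (c x y z : X) :
    op ψ c (op ψ c x y) (op ψ c x z) = c * ψ (ψ (y⁻¹ * z)) := by
  rw [op, inv_op_mul_op]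

theorem op_ward (ψ : X →* X) (c x y z : X) :
    op ψ c (op ψ c x y) (op ψ c x z) = op ψ c (op ψ c y y) (op ψ c y z) := by
  rw [op_op_op, op_op_op]

end TwistedWard

open TwistedWard in
/-- For a group (X,·), ψ ∈ Aut(X,·) and c ∈ X, the operation
x*y = c·ψ(x⁻¹·y) defines a twisted Ward quasigroup. -/
theorem stmt_6 {X : Type*} [Group X] (ψ : X ≃* X) (c : X)
    (mul : X → X → X) (hmul : ∀ x y : X, mul x y = c * ψ (x⁻¹ * y)) :
    (∀ x : X, Function.Bijective (mul x)) ∧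
    (∀ z : X, Function.Bijective (fun x => mul x z)) ∧
    (∀ x y z : X, mul (mul x y) (mul x z) = mul (mul y y) (mul y z)) := by
  obtain rfl : mul = op ψ c := funext₂ hmul
  exact ⟨op_left_bijective ψ.bijective c, op_right_bijective ψ.bijective c,
    op_ward (ψ : X →* X) c⟩
end

section
/- Let (X,·) be a group and φ, ψ automorphisms of (X,·). The quasigroups (X,*_φ) and (X,*_ψ), where x *_φ y = φ(x⁻¹·y) and x *_ψ y = ψ(x⁻¹·y), are isomorphic (as magmas) if and only if φ and ψ are conjugate in Aut(X,·). -/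
/-! Putting `x = 1` in `ρ (x *_φ y) = ρ x *_ψ ρ y` shows `ρ 1 = 1` and `ρ ∘ φ = ψ ∘ ρ`; putting
`y = 1` or inverting `x` then shows that `ρ` is multiplicative, so `ρ` is an automorphism
conjugating `φ` to `ψ`. Conversely, an automorphism `σ` is an isomorphism from `*_φ` to
`*_{σ φ σ⁻¹}`. -/

namespace MulAut

variable {X Y : Type*} [Group X] [Group Y] {φ : MulAut X} {ψ : MulAut Y} {ρ : X → Y}

theorem map_one_of_twisted_hom (h : ∀ x y : X, ρ (φ (x⁻¹ * y)) = ψ ((ρ x)⁻¹ * ρ y)) :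
    ρ 1 = 1 := by
  simpa using h 1 1

theorem comp_eq_of_twisted_hom (h : ∀ x y : X, ρ (φ (x⁻¹ * y)) = ψ ((ρ x)⁻¹ * ρ y))
    (x : X) : ρ (φ x) = ψ (ρ x) := by
  simpa [map_one_of_twisted_hom h] using h 1 x

theorem map_inv_of_twisted_hom (h : ∀ x y : X, ρ (φ (x⁻¹ * y)) = ψ ((ρ x)⁻¹ * ρ y))
    (x : X) : ρ x⁻¹ = (ρ x)⁻¹ := by
  have hx := h x 1
  rw [mul_one, map_one_of_twisted_hom h, mul_one, comp_eq_of_twisted_hom h] at hx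
  exact ψ.injective hx

theorem map_mul_of_twisted_hom (h : ∀ x y : X, ρ (φ (x⁻¹ * y)) = ψ ((ρ x)⁻¹ * ρ y))
    (x y : X) : ρ (x * y) = ρ x * ρ y := by
  have hxy := h x⁻¹ y
  rw [inv_inv, comp_eq_of_twisted_hom h, map_inv_of_twisted_hom h, inv_inv] at hxy
  exact ψ.injective hxy

theorem twisted_hom_conj (σ φ : MulAut X) (x y : X) :
    σ (φ (x⁻¹ * y)) = (σ * φ * σ⁻¹) ((σ x)⁻¹ * σ y) := by
  simp

end MulAut

/-- tWq(X,·,φ,1) and tWq(X,·,ψ,1) are isomorphic as magmas if and only if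
φ and ψ are conjugate in Aut(X,·). -/
theorem stmt_9 {X : Type*} [Group X] (φ ψ : MulAut X) :
    (∃ ρ : X ≃ X, ∀ x y : X, ρ (φ (x⁻¹ * y)) = ψ ((ρ x)⁻¹ * ρ y)) ↔
      ∃ σ : MulAut X, ψ = σ * φ * σ⁻¹ := by
  constructor
  · rintro ⟨ρ, h⟩
    refine ⟨⟨ρ, MulAut.map_mul_of_twisted_hom h⟩, MulEquiv.ext fun x => ?_⟩
    change ψ x = ρ (φ (ρ.symm x))
    rw [MulAut.comp_eq_of_twisted_hom h, ρ.apply_symm_apply]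
  · rintro ⟨σ, rfl⟩
    exact ⟨σ.toEquiv, MulAut.twisted_hom_conj σ φ⟩
end

section
/- If ρ : X → X is a bijection satisfying ρ(φ(x⁻¹y)) = ψ(ρ(x)⁻¹ρ(y)) for all x,y in a group X, where φ, ψ are automorphisms of X, then ρ is itself a group automorphism of X and ρφ = ψρ. -/
/-!
Putting `x = 1` in the identity gives `ρ 1 = 1` and then `ρ ∘ φ = ψ ∘ ρ`. Feeding the latter back
in and cancelling the injective `ψ` leaves `ρ (x⁻¹ * y) = (ρ x)⁻¹ * ρ y`, and any map between
groups with this property is multiplicative.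
-/

theorem map_mul_of_map_inv_mul {G H : Type*} [Group G] [Group H] {f : G → H}
    (hf : ∀ x y, f (x⁻¹ * y) = (f x)⁻¹ * f y) (x y : G) : f (x * y) = f x * f y := by
  have map_one : f 1 = 1 := by simpa using hf 1 1
  have map_inv : f x⁻¹ = (f x)⁻¹ := by simpa [map_one] using hf x 1
  simpa [map_inv] using hf x⁻¹ y

section TwistedMap

variable {G H : Type*} [Group G] [Group H] {φ : MulAut G} {ψ : MulAut H} {ρ : G → H}

theorem map_one_of_twisted (h : ∀ x y, ρ (φ (x⁻¹ * y)) = ψ ((ρ x)⁻¹ * ρ y)) : ρ 1 = 1 := by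
  simpa using h 1 1

theorem map_apply_of_twisted (h : ∀ x y, ρ (φ (x⁻¹ * y)) = ψ ((ρ x)⁻¹ * ρ y)) (x : G) :
    ρ (φ x) = ψ (ρ x) := by
  simpa [map_one_of_twisted h] using h 1 x

theorem map_inv_mul_of_twisted (h : ∀ x y, ρ (φ (x⁻¹ * y)) = ψ ((ρ x)⁻¹ * ρ y)) (x y : G) :
    ρ (x⁻¹ * y) = (ρ x)⁻¹ * ρ y :=
  ψ.injective <| (map_apply_of_twisted h _).symm.trans (h x y)

end TwistedMap

theorem stmt_10_general {X : Type*} [Group X] (φ ψ : MulAut X) (ρ : X → X)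
    (h : ∀ x y : X, ρ (φ (x⁻¹ * y)) = ψ ((ρ x)⁻¹ * ρ y)) :
    (∀ x y : X, ρ (x * y) = ρ x * ρ y) ∧ (∀ x : X, ρ (φ x) = ψ (ρ x)) :=
  ⟨map_mul_of_map_inv_mul (map_inv_mul_of_twisted h), map_apply_of_twisted h⟩

/-- A bijection ρ satisfying ρ(φ(x⁻¹y)) = ψ(ρ(x)⁻¹ρ(y)) for automorphisms φ, ψ
of a group X is itself a group automorphism and satisfies ρφ = ψρ. -/
theorem stmt_10 {X : Type*} [Group X] (φ ψ : MulAut X) (ρ : X → X)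
    (hρ : Function.Bijective ρ)
    (h : ∀ x y : X, ρ (φ (x⁻¹ * y)) = ψ ((ρ x)⁻¹ * ρ y)) :
    (∀ x y : X, ρ (x * y) = ρ x * ρ y) ∧ (∀ x : X, ρ (φ x) = ψ (ρ x)) :=
  stmt_10_general φ ψ ρ h
end

section
/- In a twisted Ward left quasigroup, if two left translations L_x and L_y agree at one point, then L_x = L_y. -/
theorem twistedWard_mul_mul_left_eq {X : Type*} (mul : X → X → X)
    (tW : ∀ x y z : X, mul (mul x y) (mul x z) = mul (mul y y) (mul y z))
    (x y c z : X) : mul (mul x c) (mul x z) = mul (mul y c) (mul y z) :=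
  (tW x c z).trans (tW y c z).symm

/-- In a twisted Ward left quasigroup, left translations agreeing at one point
are equal. -/
theorem stmt_11 {X : Type*} (mul : X → X → X)
    (hL : ∀ x : X, Function.Bijective (mul x))
    (tW : ∀ x y z : X, mul (mul x y) (mul x z) = mul (mul y y) (mul y z))
    (x y c : X) (h : mul x c = mul y c) :
    mul x = mul y := by
  funext z
  apply (hL (mul x c)).injective
  calc mul (mul x c) (mul x z) = mul (mul y c) (mul y z) :=
        twistedWard_mul_mul_left_eq mul tW x y c z
    _ = mul (mul x c) (mul y z) := by rw [h]
end

section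
/- Every finite faithful twisted Ward left quasigroup is a quasigroup, i.e., all right translations are also bijective. -/
open Function

/- The twisted Ward identity says that `L_{x*z} ∘ L_x = L_{z*z} ∘ L_z` does not depend on `x`,
so `x * z = y * z` lets us cancel the injective `L_{x*z}` and get `L_x = L_y`. -/
theorem injective_mul_right_of_twistedWard {X : Type*} (mul : X → X → X)
    (hL : ∀ x : X, Injective (mul x))
    (faithful : ∀ x y : X, mul x = mul y → x = y)
    (tW : ∀ x y z : X, mul (mul x y) (mul x z) = mul (mul y y) (mul y z)) (z : X) :
    Injective (fun x => mul x z) := by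
  intro x y (hxy : mul x z = mul y z)
  apply faithful
  funext w
  apply hL (mul x z)
  calc mul (mul x z) (mul x w) = mul (mul z z) (mul z w) := tW x z w
    _ = mul (mul y z) (mul y w) := (tW y z w).symm
    _ = mul (mul x z) (mul y w) := by rw [← hxy]

/-- Every finite faithful twisted Ward left quasigroup is a quasigroup. -/
theorem stmt_12 {X : Type*} [Finite X] (mul : X → X → X)
    (hL : ∀ x : X, Function.Bijective (mul x))
    (faithful : ∀ x y : X, mul x = mul y → x = y)
    (tW : ∀ x y z : X, mul (mul x y) (mul x z) = mul (mul y y) (mul y z)) :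
    ∀ z : X, Function.Bijective (fun x => mul x z) := fun z =>
  Finite.injective_iff_bijective.mp
    (injective_mul_right_of_twistedWard mul (fun x => (hL x).injective) faithful tW z)
end

section
/- In a finite twisted Ward left quasigroup, the relation x ≡ y defined by x*x = y*y is a congruence: it is preserved by multiplication on both sides and by left division. -/
/-!
Write `s a = a * a`. Putting `z = y` in the twisted Ward identity gives `s (a * b) = s (s b)`, and
with `b = a \ c` this becomes `s c = s (s (a \ c))`. Hence `s` maps its image onto itself, and since
`X` is finite it is injective there. Multiplication is then compatible because `s (a * b)` only
depends on `s b`, and left division because `s (s (a \ c)) = s c`, after cancelling `s` on its image.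
-/

theorem Set.injOn_range_of_range_subset_range_comp {X : Type*} [Finite X] {f : X → X}
    (h : Set.range f ⊆ Set.range (f ∘ f)) : Set.InjOn f (Set.range f) := by
  have hmaps : Set.MapsTo f (Set.range f) (Set.range f) := fun a _ => Set.mem_range_self a
  have hsurj : Set.SurjOn f (Set.range f) (Set.range f) := by
    intro c hc
    obtain ⟨w, rfl⟩ := h hc
    exact ⟨f w, Set.mem_range_self w, rfl⟩
  exact ((Set.toFinite _).surjOn_iff_bijOn_of_mapsTo hmaps).1 hsurj |>.injOn

section TwistedWard

variable {X : Type*} {mul : X → X → X}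
  (tW : ∀ x y z : X, mul (mul x y) (mul x z) = mul (mul y y) (mul y z))
include tW

theorem twistedWard_sq_mul (a b : X) :
    mul (mul a b) (mul a b) = mul (mul b b) (mul b b) :=
  tW a b b

theorem twistedWard_sq_eq_sq_sq_ld {ld : X → X → X} (hld : ∀ x y : X, mul x (ld x y) = y)
    (a c : X) : mul c c = mul (mul (ld a c) (ld a c)) (mul (ld a c) (ld a c)) := by
  simpa only [hld] using twistedWard_sq_mul tW a (ld a c)

theorem twistedWard_injOn_range_sq [Finite X] {ld : X → X → X}
    (hld : ∀ x y : X, mul x (ld x y) = y) :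
    Set.InjOn (fun a => mul a a) (Set.range fun a => mul a a) := by
  refine Set.injOn_range_of_range_subset_range_comp ?_
  rintro _ ⟨c, rfl⟩
  exact ⟨ld c c, (twistedWard_sq_eq_sq_sq_ld tW hld c c).symm⟩

end TwistedWard

theorem stmt_14_general {X : Type*} [Finite X] (mul : X → X → X) (ld : X → X → X)
    (hld : ∀ x y : X, mul x (ld x y) = y ∧ ld x (mul x y) = y)
    (tW : ∀ x y z : X, mul (mul x y) (mul x z) = mul (mul y y) (mul y z)) :
    ∀ x y : X, mul x x = mul y y →
      ∀ z : X,
        (mul (mul z x) (mul z x) = mul (mul z y) (mul z y)) ∧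
        (mul (mul x z) (mul x z) = mul (mul y z) (mul y z)) ∧
        (mul (ld z x) (ld z x) = mul (ld z y) (ld z y)) ∧
        (mul (ld x z) (ld x z) = mul (ld y z) (ld y z)) := by
  intro x y hxy z
  have hdiv : ∀ x y : X, mul x (ld x y) = y := fun x y => (hld x y).1
  have sq_mul := twistedWard_sq_mul tW
  have sq_ld := twistedWard_sq_eq_sq_sq_ld tW hdiv
  have cancel_sq := twistedWard_injOn_range_sq tW hdiv
  refine ⟨?_, ?_, ?_, ?_⟩
  · rw [sq_mul z x, sq_mul z y, hxy]
  · rw [sq_mul x z, sq_mul y z]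
  · exact cancel_sq (Set.mem_range_self _) (Set.mem_range_self _)
      ((sq_ld z x).symm.trans (hxy.trans (sq_ld z y)))
  · exact cancel_sq (Set.mem_range_self _) (Set.mem_range_self _)
      ((sq_ld x z).symm.trans (sq_ld y z))

/-- In a finite twisted Ward left quasigroup, the relation x ≡ y given by
x*x = y*y is a congruence: it is preserved by multiplication on both sides and
by left division on both sides. -/
theorem stmt_14 {X : Type*} [Finite X] (mul : X → X → X) (ld : X → X → X)
    (hL : ∀ x : X, Function.Bijective (mul x))
    (hld : ∀ x y : X, mul x (ld x y) = y ∧ ld x (mul x y) = y)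
    (tW : ∀ x y z : X, mul (mul x y) (mul x z) = mul (mul y y) (mul y z)) :
    ∀ x y : X, mul x x = mul y y →
      ∀ z : X,
        (mul (mul z x) (mul z x) = mul (mul z y) (mul z y)) ∧
        (mul (mul x z) (mul x z) = mul (mul y z) (mul y z)) ∧
        (mul (ld z x) (ld z x) = mul (ld z y) (ld z y)) ∧
        (mul (ld x z) (ld x z) = mul (ld y z) (ld y z)) :=
  stmt_14_general mul ld hld tW
end

section
/- In a twisted Ward left quasigroup, every equivalence class of the relation ≡ (x≡y iff x*x = y*y) has cardinality equal to the number of equivalence classes of the Cayley kernel ∼ (x∼y iff L_x = L_y). -/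
/-!
Fix `v` with `x * v = x`. The twisted Ward identity with `y = z = v` shows that every right
translate `z * v` has the same square as `x * v = x`, so `z ↦ z * v` maps `X` into the ≡-class
of `x`; it factors through the Cayley kernel, and it is injective on the quotient because the
identity with `y = v` recovers `L_z` from `z * v`. Conversely, an element of an ≡-class is
determined by its left translation, since `a * b = b * b = a * a` forces `b = a`.
Schröder–Bernstein concludes.
-/

open Function

namespace TwistedWard

variable {X : Type*} {mul : X → X → X}

theorem eq_of_mul_eq_of_mul_self_eq (hinj : ∀ a, Injective (mul a)) {a b : X}
    (hab : mul a = mul b) (hsq : mul a a = mul b b) : a = b :=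
  hinj a (hsq.trans (congrFun hab b).symm)

theorem mul_self_mul_right_eq
    (tW : ∀ x y z : X, mul (mul x y) (mul x z) = mul (mul y y) (mul y z)) (z w v : X) :
    mul (mul z v) (mul z v) = mul (mul w v) (mul w v) :=
  (tW z v v).trans (tW w v v).symm

theorem mul_eq_of_mul_right_eq (hinj : ∀ a, Injective (mul a))
    (tW : ∀ x y z : X, mul (mul x y) (mul x z) = mul (mul y y) (mul y z))
    {a b v : X} (h : mul a v = mul b v) : mul a = mul b :=
  funext fun c => hinj (mul a v) <| calc
    mul (mul a v) (mul a c) = mul (mul v v) (mul v c) := tW a v c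
    _ = mul (mul b v) (mul b c) := (tW b v c).symm
    _ = mul (mul a v) (mul b c) := by rw [h]

end TwistedWard

open TwistedWard

/-- In a twisted Ward left quasigroup, every ≡-class (x ≡ y iff x*x = y*y) has
cardinality equal to the number of classes of the Cayley kernel ∼
(x ∼ y iff L_x = L_y). -/
theorem stmt_15 {X : Type*} (mul : X → X → X)
    (hL : ∀ x : X, Function.Bijective (mul x))
    (tW : ∀ x y z : X, mul (mul x y) (mul x z) = mul (mul y y) (mul y z))
    (x : X) :
    Cardinal.mk {y : X // mul y y = mul x x} =
      Cardinal.mk (Quotient (Setoid.mk (fun a b : X => mul a = mul b)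
        ⟨fun _ => rfl, Eq.symm, Eq.trans⟩)) := by
  have hinj : ∀ a, Injective (mul a) := fun a => (hL a).1
  obtain ⟨v, hv⟩ := (hL x).2 x
  have hsq (z : X) : mul (mul z v) (mul z v) = mul x x := by
    simpa only [hv] using mul_self_mul_right_eq tW z x v
  refine le_antisymm (Cardinal.mk_le_of_injective (f := fun y => Quotient.mk _ y.1) ?_)
    (Cardinal.mk_le_of_injective
      (f := Quotient.lift (fun z => (⟨mul z v, hsq z⟩ : {y // mul y y = mul x x}))
        fun a b (h : mul a = mul b) => by simp only [h]) ?_)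
  · rintro ⟨a, ha⟩ ⟨b, hb⟩ hab
    exact Subtype.ext (eq_of_mul_eq_of_mul_self_eq hinj (Quotient.exact hab) (ha.trans hb.symm))
  · rintro ⟨a⟩ ⟨b⟩ hab
    exact Quotient.sound (mul_eq_of_mul_right_eq hinj tW (congrArg Subtype.val hab))
end

section
/- A finite twisted Ward left quasigroup X satisfies |X| = m·k, where m is the number of Cayley-kernel classes (of the relation x∼y iff L_x = L_y) and k is the number of classes of the relation x≡y iff x*x = y*y; moreover every ∼-class has size k and every ≡-class has size m. -/
/-!
Write `x ∼ y` for `L_x = L_y` and `x ≡ y` for `x * x = y * y`. A ∼-class and a ≡-class meet in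
at most one point: if `L_y = L_z` and `y * y = z * z` then `z * y = y * y = z * z`, so `y = z`.
They also always meet. The twisted Ward identity shows that `L_{x * u}` depends only on `L_x`,
and injectively so, hence right multiplication by `u` permutes the finitely many ∼-classes;
moreover `(x * u) * (x * u) = (u * u) * (u * u)` does not depend on `x`. Given `w, w'`, pick `u`
with `w * u = w'` and `x` with `x * u ∼ w`; then `y = x * u` satisfies `y ∼ w` and
`y * y = (w * u) * (w * u) = w' * w'`. So `x ↦ ([x]_∼, [x]_≡)` is a bijection.
-/

namespace Setoid

variable {X : Type*} {r s : Setoid X}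

theorem bijective_quotientMk_prod (hinj : ∀ a b, r a b → s a b → a = b)
    (hmeet : ∀ a b, ∃ y, r y a ∧ s y b) :
    Function.Bijective (fun x => (Quotient.mk r x, Quotient.mk s x)) := by
  refine ⟨fun a b h => ?_, ?_⟩
  · obtain ⟨hr, hs⟩ := Prod.ext_iff.1 h
    exact hinj a b (Quotient.exact hr) (Quotient.exact hs)
  · rintro ⟨p, q⟩
    induction p using Quotient.inductionOn with | h a => ?_
    induction q using Quotient.inductionOn with | h b => ?_
    obtain ⟨y, hra, hsb⟩ := hmeet a b
    exact ⟨y, Prod.ext (Quotient.sound hra) (Quotient.sound hsb)⟩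

theorem card_eq_card_quotient_mul_card_quotient (hinj : ∀ a b, r a b → s a b → a = b)
    (hmeet : ∀ a b, ∃ y, r y a ∧ s y b) :
    Nat.card X = Nat.card (Quotient r) * Nat.card (Quotient s) := by
  rw [← Nat.card_prod]
  exact Nat.card_congr (Equiv.ofBijective _ (bijective_quotientMk_prod hinj hmeet))

theorem card_class_eq_card_quotient (hinj : ∀ a b, r a b → s a b → a = b)
    (hmeet : ∀ a b, ∃ y, r y a ∧ s y b) (x : X) :
    Nat.card {y // r y x} = Nat.card (Quotient s) := by
  refine Nat.card_congr (Equiv.ofBijective (fun y => Quotient.mk s y.1) ⟨fun a b h => ?_, ?_⟩)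
  · exact Subtype.ext (hinj a b (r.trans a.2 (r.symm b.2)) (Quotient.exact h))
  · intro q
    induction q using Quotient.inductionOn with | h b => ?_
    obtain ⟨y, hrx, hsb⟩ := hmeet x b
    exact ⟨⟨y, hrx⟩, Quotient.sound hsb⟩

end Setoid

section TwistedWard

variable {X : Type*} (mul : X → X → X)

theorem eq_of_mul_eq_of_mul_self_eq {y z : X} (hz : Function.Injective (mul z))
    (hL : mul y = mul z) (hsq : mul y y = mul z z) : y = z :=
  hz (by rw [← congrFun hL y, hsq])

variable {mul}

theorem mul_mul_right_eq_iff (hL : ∀ x : X, Function.Bijective (mul x))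
    (tW : ∀ x y z : X, mul (mul x y) (mul x z) = mul (mul y y) (mul y z)) (x x' u : X) :
    mul (mul x u) = mul (mul x' u) ↔ mul x = mul x' := by
  constructor
  · intro h
    funext z
    apply (hL (mul x u)).1
    rw [tW x u z, h, tW x' u z]
  · intro h
    funext z
    obtain ⟨z', rfl⟩ := (hL x).2 z
    rw [tW x u z', congrFun h z', tW x' u z']

theorem exists_mul_mul_right_eq [Finite X] (hL : ∀ x : X, Function.Bijective (mul x))
    (tW : ∀ x y z : X, mul (mul x y) (mul x z) = mul (mul y y) (mul y z)) (u w : X) :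
    ∃ x, mul (mul x u) = mul w := by
  let f : Quotient (Setoid.ker mul) → Quotient (Setoid.ker mul) :=
    Quotient.map' (mul · u) fun _ _ h => (mul_mul_right_eq_iff hL tW _ _ u).2 h
  have hf : Function.Injective f := by
    intro p q
    induction p using Quotient.inductionOn with | h a => ?_
    induction q using Quotient.inductionOn with | h b => ?_
    intro h
    exact Quotient.sound ((mul_mul_right_eq_iff hL tW a b u).1 (Quotient.exact h))
  obtain ⟨p, hp⟩ := Finite.injective_iff_surjective.1 hf (Quotient.mk _ w)
  induction p using Quotient.inductionOn with | h x => ?_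
  exact ⟨x, Quotient.exact hp⟩

theorem exists_mul_eq_and_mul_self_eq [Finite X] (hL : ∀ x : X, Function.Bijective (mul x))
    (tW : ∀ x y z : X, mul (mul x y) (mul x z) = mul (mul y y) (mul y z)) (w w' : X) :
    ∃ y, mul y = mul w ∧ mul y y = mul w' w' := by
  obtain ⟨u, rfl⟩ := (hL w).2 w'
  obtain ⟨x, hx⟩ := exists_mul_mul_right_eq hL tW u w
  exact ⟨mul x u, hx, by rw [tW x u u, tW w u u]⟩

end TwistedWard

/-- A finite twisted Ward left quasigroup X satisfies |X| = m·k where m is the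
number of Cayley-kernel classes and k is the number of squaring classes;
moreover every ∼-class has size k and every ≡-class has size m. -/
theorem stmt_16 {X : Type*} [Finite X] (mul : X → X → X)
    (hL : ∀ x : X, Function.Bijective (mul x))
    (tW : ∀ x y z : X, mul (mul x y) (mul x z) = mul (mul y y) (mul y z))
    (m k : ℕ)
    (hm : m = Nat.card (Quotient (Setoid.mk (fun a b : X => mul a = mul b)
        ⟨fun _ => rfl, Eq.symm, Eq.trans⟩)))
    (hk : k = Nat.card (Quotient (Setoid.mk (fun a b : X => mul a a = mul b b)
        ⟨fun _ => rfl, Eq.symm, Eq.trans⟩))) :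
    Nat.card X = m * k ∧
    (∀ x : X, Nat.card {y : X // mul y = mul x} = k) ∧
    (∀ x : X, Nat.card {y : X // mul y y = mul x x} = m) := by
  subst hm hk
  have hinj : ∀ a b, Setoid.ker mul a b → Setoid.ker (fun x => mul x x) a b → a = b :=
    fun a b => eq_of_mul_eq_of_mul_self_eq mul (hL b).1
  have hmeet : ∀ a b, ∃ y, Setoid.ker mul y a ∧ Setoid.ker (fun x => mul x x) y b :=
    exists_mul_eq_and_mul_self_eq hL tW
  exact ⟨Setoid.card_eq_card_quotient_mul_card_quotient hinj hmeet,
    Setoid.card_class_eq_card_quotient hinj hmeet,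
    Setoid.card_class_eq_card_quotient (fun a b hs hr => hinj a b hr hs)
      fun a b => (hmeet b a).imp fun _ => And.symm⟩
end

section
/- Every twisted Ward left quasigroup of prime order is either permutational (all left translations equal) or a quasigroup (all right translations also bijective). -/
/-!
Write `L x` for the left translation by `x`. The twisted Ward identity says
`L (x * y) ∘ L x = L (y * y) ∘ L y`, so `L (x * y) = L (y * y) ∘ L y ∘ (L x)⁻¹`. Hence
`L (x * y) = L (x' * y)` forces `L x = L x'`, and `L x` maps the classes of `y ↦ L (x * y)`, which
do not depend on `x`, onto the classes of `L`. Since `[x] ↦ [x * y]` is then a bijection of the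
finite set of classes, all classes of `L` have the same size. This size divides the prime `|X|`:
either `L` is injective, and then so is every right translation, or `L` is constant.
-/

open Function

namespace Function

variable {X Y : Type*} [Finite X]

theorem dvd_card_of_ncard_fiber_eq (f : X → Y) {m : ℕ} (hf : ∀ a, {x | f x = f a}.ncard = m) :
    m ∣ Nat.card X := by
  classical
  have : Fintype X := Fintype.ofFinite X
  rw [Nat.card_eq_fintype_card, ← Finset.card_univ, Finset.card_eq_sum_card_image f]
  refine Finset.dvd_sum fun b hb => ?_
  obtain ⟨a, -, rfl⟩ := Finset.mem_image.1 hb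
  rw [← hf a, ← Set.ncard_coe_finset, Finset.coe_filter_univ]

theorem injective_or_forall_eq_of_ncard_fiber_eq (hp : (Nat.card X).Prime) (f : X → Y)
    (hf : ∀ a b, {x | f x = f a}.ncard = {x | f x = f b}.ncard) :
    Injective f ∨ ∀ a b, f a = f b := by
  obtain ⟨x₀⟩ : Nonempty X := (Nat.card_pos_iff.mp hp.pos).1
  rcases hp.eq_one_or_self_of_dvd _ (dvd_card_of_ncard_fiber_eq f (hf · x₀)) with h1 | hX
  · exact Or.inl fun a b hab => (Set.ncard_le_one_iff).1 ((hf b x₀).trans h1).le hab rfl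
  · refine Or.inr fun a b => ?_
    have huniv : {x | f x = f b} = Set.univ := (Set.eq_univ_iff_ncard _).2 ((hf b x₀).trans hX)
    exact (huniv.symm ▸ Set.mem_univ a : a ∈ {x | f x = f b})

end Function

def IsTwistedWard {X : Type*} (mul : X → X → X) : Prop :=
  ∀ x y z, mul (mul x y) (mul x z) = mul (mul y y) (mul y z)

namespace IsTwistedWard

variable {X : Type*} {mul : X → X → X}

theorem comp_mul (tW : IsTwistedWard mul) (x y : X) :
    mul (mul x y) ∘ mul x = mul (mul y y) ∘ mul y :=
  funext (tW x y)

theorem mul_eq_of_mul_mul_right_eq (tW : IsTwistedWard mul) (hinj : ∀ x, Injective (mul x))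
    {x x' y : X} (h : mul (mul x y) = mul (mul x' y)) : mul x = mul x' := by
  apply (hinj (mul x y)).comp_left
  change mul (mul x y) ∘ mul x = mul (mul x y) ∘ mul x'
  rw [tW.comp_mul, h, tW.comp_mul x' y]

theorem mul_eq_of_mul_right_eq (tW : IsTwistedWard mul) (hinj : ∀ x, Injective (mul x))
    {a b z : X} (h : mul a z = mul b z) : mul a = mul b :=
  tW.mul_eq_of_mul_mul_right_eq hinj (congrArg mul h)

theorem mul_mul_eq_iff (tW : IsTwistedWard mul) (hsurj : ∀ x, Surjective (mul x))
    (x x' y y' : X) :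
    mul (mul x y) = mul (mul x y') ↔ mul (mul x' y) = mul (mul x' y') := by
  have key : ∀ x, mul (mul x y) = mul (mul x y') ↔
      mul (mul y y) ∘ mul y = mul (mul y' y') ∘ mul y' := fun x => by
    rw [← tW.comp_mul x y, ← tW.comp_mul x y']
    exact (hsurj x).injective_comp_right.eq_iff.symm
  rw [key x, key x']

theorem exists_mul_mul_right_eq [Finite X] (tW : IsTwistedWard mul)
    (hinj : ∀ x, Injective (mul x)) (y a : X) : ∃ x, mul (mul x y) = mul a := by
  let r : Quotient (Setoid.ker mul) → Quotient (Setoid.ker mul) :=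
    Quotient.map (mul · y) fun _ _ h => congrArg mul (congrFun h y)
  have hr : Injective r := by
    rintro ⟨x⟩ ⟨x'⟩ h
    exact Quotient.sound (tW.mul_eq_of_mul_mul_right_eq hinj (Quotient.exact h))
  obtain ⟨⟨x⟩, hx⟩ := Finite.surjective_of_injective hr ⟦a⟧
  exact ⟨x, Quotient.exact hx⟩

theorem ncard_fiber_mul_mul_eq (tW : IsTwistedWard mul) (hL : ∀ x, Bijective (mul x))
    (x x' y : X) :
    {c | mul c = mul (mul x y)}.ncard = {c | mul c = mul (mul x' y)}.ncard := by
  have hpre : ∀ x,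
      {c | mul c = mul (mul x y)}.ncard = {c | mul (mul x c) = mul (mul x y)}.ncard := fun x =>
    (Set.ncard_preimage_of_injective_subset_range (hL x).1
      (by rw [(hL x).2.range_eq]; exact Set.subset_univ _)).symm
  rw [hpre x, hpre x']
  simp only [tW.mul_mul_eq_iff (fun x => (hL x).2) x x']

theorem ncard_fiber_mul_eq [Finite X] (tW : IsTwistedWard mul) (hL : ∀ x, Bijective (mul x))
    (a b : X) : {c | mul c = mul a}.ncard = {c | mul c = mul b}.ncard := by
  obtain ⟨x, hx⟩ := tW.exists_mul_mul_right_eq (fun x => (hL x).1) a a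
  obtain ⟨x', hx'⟩ := tW.exists_mul_mul_right_eq (fun x => (hL x).1) a b
  rw [← hx, ← hx']
  exact tW.ncard_fiber_mul_mul_eq hL x x' a

end IsTwistedWard

/-- Every twisted Ward left quasigroup of prime order is either permutational
or a quasigroup. -/
theorem stmt_17 {X : Type*} [Finite X] (hp : (Nat.card X).Prime)
    (mul : X → X → X)
    (hL : ∀ x : X, Function.Bijective (mul x))
    (tW : ∀ x y z : X, mul (mul x y) (mul x z) = mul (mul y y) (mul y z)) :
    (∀ x y : X, mul x = mul y) ∨
      (∀ z : X, Function.Bijective (fun x => mul x z)) := by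
  have hW : IsTwistedWard mul := tW
  rcases injective_or_forall_eq_of_ncard_fiber_eq hp mul (hW.ncard_fiber_mul_eq hL)
    with hinj | hconst
  · exact Or.inr fun z => Finite.injective_iff_bijective.1 fun a b h =>
      hinj (hW.mul_eq_of_mul_right_eq (fun x => (hL x).1) h)
  · exact Or.inl hconst
end

section
/- Let (X,*) be a left quasigroup with left division \ satisfying the twisted Ward identity (x*y)*(x*z) = (y*y)*(y*z). Define r : X×X → X×X by r(x,y) = (x\y, (x\y)*(x\y)). Then r satisfies the set-theoretic Yang–Baxter equation (r×id)(id×r)(r×id) = (id×r)(r×id)(id×r) and is idempotent: r∘r = r. -/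
/-! Write `a := x\y`, `b := y\z` and `e := x\b`. The twisted Ward identity gives
`(a*a)*(a*e) = (x*a)*(x*e) = y*b = z`, so `(a*a)\z = a*e`, and also
`(x*e)*(x*e) = (e*e)*(e*e)`, i.e. `(e*e)\(b*b) = e*e`. With these two divisions both sides of the
braid relation at `(x, y, z)` evaluate to `(e, e*e, (e*e)*(e*e))`. Idempotence only uses `u\(u*v) = v`. -/

section TwistedWard

variable {X : Type*} {mul ld : X → X → X}

theorem ld_eq_of_mul_eq (ld_mul : ∀ x y : X, ld x (mul x y) = y)
    {x y z : X} (h : mul x z = y) : ld x y = z :=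
  h ▸ ld_mul x z

theorem ld_mul_self_ld_eq (hld : ∀ x y : X, mul x (ld x y) = y ∧ ld x (mul x y) = y)
    (tW : ∀ x y z : X, mul (mul x y) (mul x z) = mul (mul y y) (mul y z))
    (x y z : X) :
    ld (mul (ld x y) (ld x y)) z = mul (ld x y) (ld x (ld y z)) :=
  ld_eq_of_mul_eq (fun x y => (hld x y).2) <| by
    rw [← tW, (hld x y).1, (hld x _).1, (hld y z).1]

theorem ld_mul_self_ld_mul_self (hld : ∀ x y : X, mul x (ld x y) = y ∧ ld x (mul x y) = y)
    (tW : ∀ x y z : X, mul (mul x y) (mul x z) = mul (mul y y) (mul y z))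
    (x y : X) :
    ld (mul (ld x y) (ld x y)) (mul y y) = mul (ld x y) (ld x y) :=
  ld_eq_of_mul_eq (fun x y => (hld x y).2) <| by
    conv_rhs => rw [← (hld x y).1]
    exact (tW x _ _).symm

end TwistedWard

theorem stmt_18_general {X : Type*} (mul : X → X → X) (ld : X → X → X)
    (hld : ∀ x y : X, mul x (ld x y) = y ∧ ld x (mul x y) = y)
    (tW : ∀ x y z : X, mul (mul x y) (mul x z) = mul (mul y y) (mul y z))
    (r : X × X → X × X)
    (hr : ∀ x y : X, r (x, y) = (ld x y, mul (ld x y) (ld x y))) :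
    (∀ p : X × X × X,
      (let R1 : X × X × X → X × X × X :=
        fun q => ((r (q.1, q.2.1)).1, (r (q.1, q.2.1)).2, q.2.2);
       let R2 : X × X × X → X × X × X :=
        fun q => (q.1, (r (q.2.1, q.2.2)).1, (r (q.2.1, q.2.2)).2);
       R1 (R2 (R1 p)) = R2 (R1 (R2 p)))) ∧
    (∀ q : X × X, r (r q) = r q) := by
  constructor
  · rintro ⟨x, y, z⟩
    simp only [hr]
    rw [ld_mul_self_ld_eq hld tW, (hld _ _).2, ld_mul_self_ld_mul_self hld tW, tW (ld x y)]
  · rintro ⟨x, y⟩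
    rw [hr, hr, (hld _ _).2]

/-- For a twisted Ward left quasigroup (X,*) with left division \, the map
r(x,y) = (x\y, (x\y)*(x\y)) is an idempotent solution of the set-theoretic
Yang–Baxter equation. -/
theorem stmt_18 {X : Type*} (mul : X → X → X) (ld : X → X → X)
    (hL : ∀ x : X, Function.Bijective (mul x))
    (hld : ∀ x y : X, mul x (ld x y) = y ∧ ld x (mul x y) = y)
    (tW : ∀ x y z : X, mul (mul x y) (mul x z) = mul (mul y y) (mul y z))
    (r : X × X → X × X)
    (hr : ∀ x y : X, r (x, y) = (ld x y, mul (ld x y) (ld x y))) :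
    (∀ p : X × X × X,
      (let R1 : X × X × X → X × X × X :=
        fun q => ((r (q.1, q.2.1)).1, (r (q.1, q.2.1)).2, q.2.2);
       let R2 : X × X × X → X × X × X :=
        fun q => (q.1, (r (q.2.1, q.2.2)).1, (r (q.2.1, q.2.2)).2);
       R1 (R2 (R1 p)) = R2 (R1 (R2 p)))) ∧
    (∀ q : X × X, r (r q) = r q) :=
  stmt_18_general mul ld hld tW r hr
end

section
/- Let r : X×X → X×X, r(x,y) = (x∘y, x∙y), be an idempotent braiding (solution of the set-theoretic Yang–Baxter equation with r∘r = r) that is nondegenerate (all maps y ↦ x∘y and all maps x ↦ x∙y are bijective). If |X| ≥ 2, a contradiction follows; i.e., every idempotent nondegenerate braiding exists only on sets with at most one element. -/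
/-!
Write `r (x, y) = (x ∘ y, x ∙ y)`. Idempotence turns every value `r (x, a) = (u, v)` into a fixed point
`r (u, v) = (u, v)`, so surjectivity of `x ↦ x ∙ a` gives a fixed point over every `v`. At `(x, u, v)`
the right-hand side of the braid relation then collapses, and its first component reads
`(x ∘ u) ∘ ((x ∙ u) ∘ v) = x ∘ u = (x ∘ u) ∘ (x ∙ u)`. Cancelling `x ∘ u` on the left gives
`(x ∙ u) ∘ v = x ∙ u`, and since `x ∙ u` runs through all of `X`, every `q ∘ v = q`. So each left
translation `y ↦ q ∘ y` is constant, and it can only be injective on a subsingleton.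
-/

namespace IdempotentBraiding

variable {X : Type*} {r : X × X → X × X}

def IsBraiding (r : X × X → X × X) : Prop :=
  ∀ p : X × X × X,
    let R1 : X × X × X → X × X × X := fun q => ((r (q.1, q.2.1)).1, (r (q.1, q.2.1)).2, q.2.2)
    let R2 : X × X × X → X × X × X := fun q => (q.1, (r (q.2.1, q.2.2)).1, (r (q.2.1, q.2.2)).2)
    R1 (R2 (R1 p)) = R2 (R1 (R2 p))

theorem exists_apply_eq_self (hidem : ∀ q, r (r q) = r q) {a : X}
    (hsurj : Function.Surjective fun x => (r (x, a)).2) (v : X) : ∃ u, r (u, v) = (u, v) := by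
  obtain ⟨x, rfl⟩ := hsurj v
  exact ⟨(r (x, a)).1, hidem (x, a)⟩

theorem fst_apply_snd_eq_of_apply_eq_self (hYB : IsBraiding r) (hidem : ∀ q, r (r q) = r q)
    (hinj : ∀ x, Function.Injective fun y => (r (x, y)).1) {u v : X} (hfix : r (u, v) = (u, v))
    (x : X) : (r ((r (x, u)).2, v)).1 = (r (x, u)).2 := by
  have hbraid := congrArg Prod.fst (hYB (x, u, v))
  simp only [hfix] at hbraid
  apply hinj (r (x, u)).1
  simp only [hbraid]
  exact (congrArg Prod.fst (hidem (x, u))).symm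

theorem fst_apply_eq_self (hYB : IsBraiding r) (hidem : ∀ q, r (r q) = r q)
    (hinj : ∀ x, Function.Injective fun y => (r (x, y)).1)
    (hsurj : ∀ y, Function.Surjective fun x => (r (x, y)).2) (q v : X) : (r (q, v)).1 = q := by
  obtain ⟨u, hfix⟩ := exists_apply_eq_self hidem (hsurj q) v
  obtain ⟨x, rfl⟩ := hsurj u q
  exact fst_apply_snd_eq_of_apply_eq_self hYB hidem hinj hfix x

end IdempotentBraiding

/-- Every idempotent nondegenerate braiding exists only on sets with at most
one element: if |X| ≥ 2, a contradiction follows. -/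
theorem stmt_19 {X : Type*} (r : X × X → X × X)
    (hYB : ∀ p : X × X × X,
      (let R1 : X × X × X → X × X × X :=
        fun q => ((r (q.1, q.2.1)).1, (r (q.1, q.2.1)).2, q.2.2);
       let R2 : X × X × X → X × X × X :=
        fun q => (q.1, (r (q.2.1, q.2.2)).1, (r (q.2.1, q.2.2)).2);
       R1 (R2 (R1 p)) = R2 (R1 (R2 p))))
    (hidem : ∀ q : X × X, r (r q) = r q)
    (hleft : ∀ x : X, Function.Bijective (fun y => (r (x, y)).1))
    (hright : ∀ y : X, Function.Bijective (fun x => (r (x, y)).2))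
    (h2 : ∃ x y : X, x ≠ y) :
    False := by
  obtain ⟨a, b, hab⟩ := h2
  have hinj y := (hleft y).1
  have hconst := IdempotentBraiding.fst_apply_eq_self hYB hidem hinj (fun y => (hright y).2) a
  exact hab (hinj a ((hconst a).trans (hconst b).symm))
end
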